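/- arXiv:1510.02361 — 5 statements merged into one kernel-verified Lean document; each statement's English description precedes it below -/
import Mathlib

section
/- Let d ≥ 3, γ ∈ [0, d-2], and let m be a weight of one of the two forms m(v) = exp(-a|v|^s) with a > 0, s ∈ (0,1], or m(v) = (1+|v|^β)^{-1} with β > 0; let ν be the measure on ℝ^d with density m(v)^{-1} with respect to Lebesgue measure. Then for every p with 1 < p < d/(d-γ-1) there exists C > 0 (depending on d, γ, the weight and p) such that for every Borel set A ⊆ ℝ^d and every w ∈ ℝ^d, ∫_A |v-w|^{γ+1-d} m(v)^{-1} dv ≤ C ( m(w)^{-1/p} ν(A)^{1/q} + ν(A) ), where 1/p + 1/q = 1. -/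
/-!
Split `A` into its part inside the unit ball around `w` and the rest. Outside the ball the kernel
`|v - w|^(γ+1-d)` is at most `1`, which gives the `ν(A)` term. Inside, Hölder's inequality for the
measure `m⁻¹ dv` gives the bound `(∫_{B(w,1)} |v - w|^((γ+1-d)p) m(v)⁻¹ dv)^(1/p) ν(A)^(1/q)`.
Both weights satisfy `m(v)⁻¹ ≤ C₀ m(w)⁻¹` when `|v - w| ≤ 1`, and `|x|^((γ+1-d)p)` is integrable
on the unit ball precisely because `p < d/(d-γ-1)`.
-/

open MeasureTheory Real Metric Set Filter ENNReal

noncomputable section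

abbrev Euc (d : ℕ) := EuclideanSpace ℝ (Fin d)

/-- The normalized Maxwellian `M(v) = (2π)^{-d/2} exp(-|v|²/2)`. -/
def Maxw (d : ℕ) (v : Euc d) : ℝ := (2 * π) ^ (-(d : ℝ) / 2) * Real.exp (-‖v‖ ^ 2 / 2)

theorem Real.rpow_le_rpow_add_one {x y s : ℝ} (hx : 0 ≤ x) (hy : 0 ≤ y) (hs₀ : 0 ≤ s)
    (hs₁ : s ≤ 1) (h : x ≤ y + 1) : x ^ s ≤ y ^ s + 1 :=
  calc x ^ s ≤ (y + 1) ^ s := rpow_le_rpow hx h hs₀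
    _ ≤ y ^ s + 1 ^ s := rpow_add_le_add_rpow hy zero_le_one hs₀ hs₁
    _ = y ^ s + 1 := by rw [one_rpow]

theorem Real.one_add_rpow_le_mul_one_add_rpow {x y β : ℝ} (hx : 0 ≤ x) (hy : 0 ≤ y) (hβ : 0 ≤ β)
    (h : x ≤ y + 1) : 1 + x ^ β ≤ (1 + 2 ^ β) * (1 + y ^ β) := by
  have hmax : x ^ β ≤ 2 ^ β * (1 + y ^ β) :=
    calc x ^ β ≤ (2 * max y 1) ^ β :=
          rpow_le_rpow hx (by linarith [le_max_left y 1, le_max_right y 1]) hβ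
      _ = 2 ^ β * max (y ^ β) 1 := by
          rw [mul_rpow zero_le_two (by positivity), rpow_max hy zero_le_one hβ, one_rpow]
      _ ≤ 2 ^ β * (1 + y ^ β) := by
          gcongr
          exact max_le (by linarith) (by linarith [rpow_nonneg hy β])
  nlinarith [rpow_nonneg hy β, rpow_pos_of_pos two_pos β]

def IsAdmissibleWeight {E : Type*} [Norm E] (m : E → ℝ) : Prop :=
  (∃ a s : ℝ, 0 < a ∧ s ∈ Ioc (0 : ℝ) 1 ∧ ∀ v, m v = Real.exp (-(a * ‖v‖ ^ s))) ∨
    (∃ β : ℝ, 0 < β ∧ ∀ v, m v = (1 + ‖v‖ ^ β)⁻¹)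

namespace IsAdmissibleWeight

variable {E : Type*} [SeminormedAddCommGroup E] {m : E → ℝ}

theorem pos (hm : IsAdmissibleWeight m) (v : E) : 0 < m v := by
  rcases hm with ⟨a, s, -, -, hm⟩ | ⟨β, -, hm⟩ <;> rw [hm]
  · exact exp_pos _
  · have := rpow_nonneg (norm_nonneg v) β
    positivity

theorem measurable [MeasurableSpace E] [OpensMeasurableSpace E] (hm : IsAdmissibleWeight m) :
    Measurable m := by
  rcases hm with ⟨a, s, -, -, hm⟩ | ⟨β, -, hm⟩ <;> rw [funext hm] <;> fun_prop

theorem exists_inv_le_mul_inv (hm : IsAdmissibleWeight m) :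
    ∃ C₀ : ℝ, 0 ≤ C₀ ∧ ∀ v w : E, ‖v - w‖ ≤ 1 → (m v)⁻¹ ≤ C₀ * (m w)⁻¹ := by
  have hvw : ∀ v w : E, ‖v - w‖ ≤ 1 → ‖v‖ ≤ ‖w‖ + 1 := fun v w h => by
    linarith [norm_sub_norm_le v w]
  rcases hm with ⟨a, s, ha, hs, hm⟩ | ⟨β, hβ, hm⟩
  · refine ⟨exp a, (exp_pos a).le, fun v w h => ?_⟩
    rw [hm, hm, exp_neg, exp_neg, inv_inv, inv_inv, ← exp_add, exp_le_exp]
    have := rpow_le_rpow_add_one (norm_nonneg v) (norm_nonneg w) hs.1.le hs.2 (hvw v w h)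
    nlinarith
  · refine ⟨1 + 2 ^ β, by positivity, fun v w h => ?_⟩
    rw [hm, hm, inv_inv, inv_inv]
    exact one_add_rpow_le_mul_one_add_rpow (norm_nonneg v) (norm_nonneg w) hβ.le (hvw v w h)

end IsAdmissibleWeight

theorem ENNReal.lintegral_mul_le_weighted_Lp {α : Type*} [MeasurableSpace α] (μ : Measure α)
    {p q : ℝ} (hpq : p.HolderConjugate q) {f g : α → ℝ≥0∞} (hf : AEMeasurable f μ)
    (hg : AEMeasurable g μ) :
    ∫⁻ x, f x * g x ∂μ ≤ (∫⁻ x, f x ^ p * g x ∂μ) ^ (1 / p) * (∫⁻ x, g x ∂μ) ^ (1 / q) := by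
  have hsplit : ∀ x, f x * g x = (f x * g x ^ (1 / p)) * g x ^ (1 / q) := fun x => by
    rw [mul_assoc, ← ENNReal.rpow_add_of_nonneg _ _ hpq.one_div_nonneg
      hpq.symm.one_div_nonneg, one_div, one_div, hpq.inv_add_inv_eq_one, ENNReal.rpow_one]
  have hfp : ∀ x, (f x * g x ^ (1 / p)) ^ p = f x ^ p * g x := fun x => by
    rw [ENNReal.mul_rpow_of_nonneg _ _ hpq.nonneg, ← ENNReal.rpow_mul,
      one_div_mul_cancel hpq.ne_zero, ENNReal.rpow_one]
  have hgq : ∀ x, (g x ^ (1 / q)) ^ q = g x := fun x => by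
    rw [← ENNReal.rpow_mul, one_div_mul_cancel hpq.symm.ne_zero, ENNReal.rpow_one]
  calc ∫⁻ x, f x * g x ∂μ = ∫⁻ x, (f x * g x ^ (1 / p)) * g x ^ (1 / q) ∂μ :=
        lintegral_congr hsplit
    _ ≤ (∫⁻ x, (f x * g x ^ (1 / p)) ^ p ∂μ) ^ (1 / p) *
          (∫⁻ x, (g x ^ (1 / q)) ^ q ∂μ) ^ (1 / q) :=
        ENNReal.lintegral_mul_le_Lp_mul_Lq μ hpq (hf.mul (hg.pow_const _)) (hg.pow_const _)
    _ = _ := by simp only [hfp, hgq]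

theorem setLIntegral_ball_comp_sub {E : Type*} [NormedAddCommGroup E] [MeasurableSpace E]
    [BorelSpace E] (μ : Measure E) [μ.IsAddRightInvariant] (g : E → ℝ≥0∞) (w : E) (r : ℝ) :
    ∫⁻ v in ball w r, g (v - w) ∂μ = ∫⁻ x in ball 0 r, g x ∂μ := by
  have hball : (· - w) ⁻¹' ball (0 : E) r = ball w r := by ext v; simp [dist_eq_norm]
  rw [← hball]
  exact (measurePreserving_sub_right μ w).setLIntegral_comp_preimage_emb
    (measurableEmbedding_subRight w) g _

theorem lintegral_ball_norm_rpow_lt_top {E : Type*} [NormedAddCommGroup E] [NormedSpace ℝ E]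
    [FiniteDimensional ℝ E] [MeasurableSpace E] [BorelSpace E] (μ : Measure E)
    [μ.IsAddHaarMeasure] {τ : ℝ} (hτ₀ : τ ≤ 0) (hτ : -(Module.finrank ℝ E : ℝ) < τ) :
    ∫⁻ x in ball (0 : E) 1, ENNReal.ofReal (‖x‖ ^ τ) ∂μ < ∞ := by
  have hdim : 1 ≤ Module.finrank ℝ E := by exact_mod_cast (neg_lt_zero.1 (hτ.trans_le hτ₀))
  refine IntegrableOn.setLIntegral_lt_top (integrableOn_ball_of_norm_le_rpow (C := 1) (α := -τ)
    hdim (by linarith) (Eventually.of_forall fun x => ?_)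
    (by fun_prop : Measurable _).aestronglyMeasurable)
  rw [one_mul, neg_neg, Real.norm_of_nonneg (by positivity)]

theorem setLIntegral_diff_ball_norm_sub_rpow_mul_le {E : Type*} [SeminormedAddCommGroup E]
    [MeasurableSpace E] (μ : Measure E) {W : E → ℝ} (hW₀ : ∀ v, 0 ≤ W v)
    (hW : Measurable W) {σ : ℝ} (hσ : σ ≤ 0) (A : Set E) (w : E) :
    ∫⁻ v in A \ ball w 1, ENNReal.ofReal (‖v - w‖ ^ σ * W v) ∂μ ≤
      ∫⁻ v in A, ENNReal.ofReal (W v) ∂μ := by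
  refine (setLIntegral_mono (by fun_prop) fun v hv => ?_).trans (lintegral_mono_set sdiff_subset)
  have hfar : 1 ≤ ‖v - w‖ := by simpa [dist_eq_norm] using hv.2
  exact ENNReal.ofReal_le_ofReal
    (mul_le_of_le_one_left (hW₀ v) (rpow_le_one_of_one_le_of_nonpos hfar hσ))

theorem setLIntegral_ball_norm_sub_rpow_mul_le {E : Type*} [NormedAddCommGroup E]
    [MeasurableSpace E] [BorelSpace E] (μ : Measure E) [μ.IsAddRightInvariant] {W : E → ℝ}
    {C₀ : ℝ} (hC₀ : 0 ≤ C₀) (hWC : ∀ v w : E, ‖v - w‖ ≤ 1 → W v ≤ C₀ * W w) (τ : ℝ) (w : E) :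
    ∫⁻ v in ball w 1, ENNReal.ofReal (‖v - w‖ ^ τ * W v) ∂μ ≤
      ENNReal.ofReal C₀ * ENNReal.ofReal (W w) *
        ∫⁻ x in ball (0 : E) 1, ENNReal.ofReal (‖x‖ ^ τ) ∂μ := by
  calc ∫⁻ v in ball w 1, ENNReal.ofReal (‖v - w‖ ^ τ * W v) ∂μ
      ≤ ∫⁻ v in ball w 1, ENNReal.ofReal C₀ * ENNReal.ofReal (W w) *
          ENNReal.ofReal (‖v - w‖ ^ τ) ∂μ := by
        refine setLIntegral_mono' measurableSet_ball fun v hv => ?_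
        rw [← ENNReal.ofReal_mul hC₀, ← ENNReal.ofReal_mul' (rpow_nonneg (norm_nonneg _) _),
          mul_comm (C₀ * W w)]
        gcongr
        exact hWC v w (mem_ball_iff_norm.1 hv).le
    _ = ENNReal.ofReal C₀ * ENNReal.ofReal (W w) *
          ∫⁻ v in ball w 1, ENNReal.ofReal (‖v - w‖ ^ τ) ∂μ :=
        lintegral_const_mul' _ _ (by finiteness)
    _ = _ := by rw [setLIntegral_ball_comp_sub μ (fun x => ENNReal.ofReal (‖x‖ ^ τ))]

theorem setLIntegral_inter_ball_norm_sub_rpow_mul_le {E : Type*} [NormedAddCommGroup E]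
    [MeasurableSpace E] [BorelSpace E] (μ : Measure E) [μ.IsAddRightInvariant] {W : E → ℝ}
    (hW₀ : ∀ v, 0 ≤ W v) (hW : Measurable W) {C₀ : ℝ} (hC₀ : 0 ≤ C₀)
    (hWC : ∀ v w : E, ‖v - w‖ ≤ 1 → W v ≤ C₀ * W w) {σ p q : ℝ} (hpq : p.HolderConjugate q)
    (A : Set E) (w : E) :
    ∫⁻ v in A ∩ ball w 1, ENNReal.ofReal (‖v - w‖ ^ σ * W v) ∂μ ≤
      (ENNReal.ofReal C₀ * ∫⁻ x in ball (0 : E) 1, ENNReal.ofReal (‖x‖ ^ (σ * p)) ∂μ) ^ (1 / p) *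
        (ENNReal.ofReal (W w ^ (1 / p)) * (∫⁻ v in A, ENNReal.ofReal (W v) ∂μ) ^ (1 / q)) := by
  set K := ∫⁻ x in ball (0 : E) 1, ENNReal.ofReal (‖x‖ ^ (σ * p)) ∂μ
  set ν := ∫⁻ v in A, ENNReal.ofReal (W v) ∂μ
  calc ∫⁻ v in A ∩ ball w 1, ENNReal.ofReal (‖v - w‖ ^ σ * W v) ∂μ
      = ∫⁻ v in A ∩ ball w 1, ENNReal.ofReal (‖v - w‖ ^ σ) * ENNReal.ofReal (W v) ∂μ :=
        lintegral_congr fun v => ENNReal.ofReal_mul (by positivity)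
    _ ≤ (∫⁻ v in A ∩ ball w 1, ENNReal.ofReal (‖v - w‖ ^ σ) ^ p * ENNReal.ofReal (W v) ∂μ)
          ^ (1 / p) * (∫⁻ v in A ∩ ball w 1, ENNReal.ofReal (W v) ∂μ) ^ (1 / q) :=
        ENNReal.lintegral_mul_le_weighted_Lp _ hpq (by fun_prop) (by fun_prop)
    _ ≤ (∫⁻ v in ball w 1, ENNReal.ofReal (‖v - w‖ ^ (σ * p) * W v) ∂μ) ^ (1 / p)
          * ν ^ (1 / q) := by
        refine mul_le_mul' (ENNReal.rpow_le_rpow ?_ hpq.one_div_nonneg)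
          (ENNReal.rpow_le_rpow (lintegral_mono_set inter_subset_left) hpq.symm.one_div_nonneg)
        refine (lintegral_mono_set inter_subset_right).trans_eq (lintegral_congr fun v => ?_)
        rw [ENNReal.ofReal_rpow_of_nonneg (by positivity) hpq.nonneg,
          ← rpow_mul (norm_nonneg _), ENNReal.ofReal_mul (by positivity)]
    _ ≤ (ENNReal.ofReal C₀ * ENNReal.ofReal (W w) * K) ^ (1 / p) * ν ^ (1 / q) :=
        mul_le_mul_left (ENNReal.rpow_le_rpow
          (setLIntegral_ball_norm_sub_rpow_mul_le μ hC₀ hWC _ w) hpq.one_div_nonneg) _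
    _ = (ENNReal.ofReal C₀ * K) ^ (1 / p) * (ENNReal.ofReal (W w ^ (1 / p)) * ν ^ (1 / q)) := by
        rw [mul_right_comm, ENNReal.mul_rpow_of_nonneg _ _ hpq.one_div_nonneg,
          ENNReal.ofReal_rpow_of_nonneg (hW₀ w) hpq.one_div_nonneg, mul_assoc]

theorem exists_lintegral_norm_sub_rpow_mul_le {E : Type*} [NormedAddCommGroup E]
    [NormedSpace ℝ E] [FiniteDimensional ℝ E] [MeasurableSpace E] [BorelSpace E]
    (μ : Measure E) [μ.IsAddHaarMeasure] {W : E → ℝ} (hW₀ : ∀ v, 0 ≤ W v) (hW : Measurable W)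
    {C₀ : ℝ} (hC₀ : 0 ≤ C₀) (hWC : ∀ v w : E, ‖v - w‖ ≤ 1 → W v ≤ C₀ * W w)
    {σ p q : ℝ} (hσ : σ ≤ 0) (hpq : p.HolderConjugate q)
    (hσp : -(Module.finrank ℝ E : ℝ) < σ * p) :
    ∃ C : ℝ, 0 < C ∧ ∀ (A : Set E) (w : E),
      ∫⁻ v in A, ENNReal.ofReal (‖v - w‖ ^ σ * W v) ∂μ
        ≤ ENNReal.ofReal C *
            (ENNReal.ofReal (W w ^ (1 / p)) * (∫⁻ v in A, ENNReal.ofReal (W v) ∂μ) ^ (1 / q)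
              + ∫⁻ v in A, ENNReal.ofReal (W v) ∂μ) := by
  set c := (ENNReal.ofReal C₀ * ∫⁻ x in ball (0 : E) 1, ENNReal.ofReal (‖x‖ ^ (σ * p)) ∂μ)
    ^ (1 / p)
  have hK := lintegral_ball_norm_rpow_lt_top μ (mul_nonpos_of_nonpos_of_nonneg hσ hpq.nonneg) hσp
  have hc : c ≠ ∞ := ENNReal.rpow_ne_top_of_nonneg hpq.one_div_nonneg (by finiteness)
  refine ⟨max c.toReal 1, by positivity, fun A w => ?_⟩
  set X := ENNReal.ofReal (W w ^ (1 / p)) * (∫⁻ v in A, ENNReal.ofReal (W v) ∂μ) ^ (1 / q)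
  calc ∫⁻ v in A, ENNReal.ofReal (‖v - w‖ ^ σ * W v) ∂μ
      ≤ ∫⁻ v in A ∩ ball w 1, ENNReal.ofReal (‖v - w‖ ^ σ * W v) ∂μ
          + ∫⁻ v in A \ ball w 1, ENNReal.ofReal (‖v - w‖ ^ σ * W v) ∂μ := by
        conv_lhs => rw [← inter_union_sdiff A (ball w 1)]
        exact lintegral_union_le _ _ _
    _ ≤ c * X + 1 * ∫⁻ v in A, ENNReal.ofReal (W v) ∂μ := by
        rw [one_mul]
        exact add_le_add (setLIntegral_inter_ball_norm_sub_rpow_mul_le μ hW₀ hW hC₀ hWC hpq A w)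
          (setLIntegral_diff_ball_norm_sub_rpow_mul_le μ hW₀ hW hσ A w)
    _ ≤ ENNReal.ofReal (max c.toReal 1) * X
          + ENNReal.ofReal (max c.toReal 1) * ∫⁻ v in A, ENNReal.ofReal (W v) ∂μ := by
        gcongr
        · exact (ENNReal.le_ofReal_iff_toReal_le hc (by positivity)).2 (le_max_left _ _)
        · rw [← ENNReal.ofReal_one]; gcongr; exact le_max_right _ _
    _ = _ := (mul_add _ _ _).symm

theorem uniform_integrability_DP11_general
    (d : ℕ) (γ : ℝ) (hγ : γ ∈ Set.Icc (0 : ℝ) ((d : ℝ) - 2))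
    (m : Euc d → ℝ)
    (hm : (∃ a s : ℝ, 0 < a ∧ s ∈ Set.Ioc (0 : ℝ) 1 ∧
            ∀ v : Euc d, m v = Real.exp (-(a * ‖v‖ ^ s)))
        ∨ (∃ β : ℝ, 0 < β ∧ ∀ v : Euc d, m v = (1 + ‖v‖ ^ β)⁻¹))
    (p q : ℝ) (hp : 1 < p) (hpd : p < (d : ℝ) / ((d : ℝ) - γ - 1)) (hq : 1 / p + 1 / q = 1) :
    ∃ C : ℝ, 0 < C ∧ ∀ A : Set (Euc d), MeasurableSet A → ∀ w : Euc d,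
      ∫⁻ v in A, ENNReal.ofReal (‖v - w‖ ^ (γ + 1 - (d : ℝ)) * (m v)⁻¹)
        ≤ ENNReal.ofReal C *
            (ENNReal.ofReal ((m w)⁻¹ ^ (1 / p)) *
                (∫⁻ v in A, ENNReal.ofReal ((m v)⁻¹)) ^ (1 / q)
              + ∫⁻ v in A, ENNReal.ofReal ((m v)⁻¹)) := by
  have hm : IsAdmissibleWeight m := hm
  have hpq : p.HolderConjugate q :=
    Real.holderConjugate_iff.2 ⟨hp, by simpa only [one_div] using hq⟩
  have hσp : -(Module.finrank ℝ (Euc d) : ℝ) < (γ + 1 - d) * p := by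
    rw [finrank_euclideanSpace_fin]
    have := (lt_div_iff₀ (by linarith [hγ.2] : (0 : ℝ) < d - γ - 1)).1 hpd
    linarith
  obtain ⟨C₀, hC₀, hWC⟩ := hm.exists_inv_le_mul_inv
  obtain ⟨C, hC, hbound⟩ := exists_lintegral_norm_sub_rpow_mul_le volume
    (fun v => (inv_pos.2 (hm.pos v)).le) hm.measurable.inv hC₀ hWC (by linarith [hγ.2]) hpq hσp
  exact ⟨C, hC, fun A _ w => hbound A w⟩

/-- The uniform-integrability estimate (DP11). -/
theorem uniform_integrability_DP11
    (d : ℕ) (hd : 3 ≤ d) (γ : ℝ) (hγ : γ ∈ Set.Icc (0 : ℝ) ((d : ℝ) - 2))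
    (m : Euc d → ℝ)
    (hm : (∃ a s : ℝ, 0 < a ∧ s ∈ Set.Ioc (0 : ℝ) 1 ∧
            ∀ v : Euc d, m v = Real.exp (-(a * ‖v‖ ^ s)))
        ∨ (∃ β : ℝ, 0 < β ∧ ∀ v : Euc d, m v = (1 + ‖v‖ ^ β)⁻¹))
    (p q : ℝ) (hp : 1 < p) (hpd : p < (d : ℝ) / ((d : ℝ) - γ - 1)) (hq : 1 / p + 1 / q = 1) :
    ∃ C : ℝ, 0 < C ∧ ∀ A : Set (Euc d), MeasurableSet A → ∀ w : Euc d,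
      ∫⁻ v in A, ENNReal.ofReal (‖v - w‖ ^ (γ + 1 - (d : ℝ)) * (m v)⁻¹)
        ≤ ENNReal.ofReal C *
            (ENNReal.ofReal ((m w)⁻¹ ^ (1 / p)) *
                (∫⁻ v in A, ENNReal.ofReal ((m v)⁻¹)) ^ (1 / q)
              + ∫⁻ v in A, ENNReal.ofReal ((m v)⁻¹)) :=
  uniform_integrability_DP11_general d γ hγ m hm p q hp hpd hq

end
end

section
/- Let d ≥ 3, γ ∈ [0, d-2], and let m be a weight of one of the two forms m(v) = exp(-a|v|^s) with a > 0, s ∈ (0,1], or m(v) = (1+|v|^β)^{-1} with β > 0. Then lim_{r→∞} sup_{|w| ≤ r/2} [ m(w) (1+|w|)^{-γ} ∫_{|v| > r} κ_γ(v,w) m(v)^{-1} dv ] = 0. -/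
open MeasureTheory Real Metric Set Filter ENNReal Topology
open scoped RealInnerProductSpace

noncomputable section

/-- The hard-spheres Carleman kernel `k_{d-2}(v,w)`. -/
def kHS (d : ℕ) (v w : Euc d) : ℝ :=
  2 ^ (d - 1) * (2 * π) ^ (-(1 : ℝ) / 2) * ‖v - w‖⁻¹ *
    Real.exp (-(1 / 8) * (‖v - w‖ + (‖v‖ ^ 2 - ‖w‖ ^ 2) / ‖v - w‖) ^ 2)

/-- `κ_γ(v,w) = |v-w|^{γ-(d-2)} k_{d-2}(v,w)`, dominating the Carleman kernel of
the gain operator with kernel exponent `γ ≤ d-2`. -/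
def kker (d : ℕ) (γ : ℝ) (v w : Euc d) : ℝ := ‖v - w‖ ^ (γ - ((d : ℝ) - 2)) * kHS d v w

lemma integrable_gauss (d : ℕ) {b : ℝ} (hb : 0 < b) :
    Integrable (fun v : Euc d => Real.exp (-b * ‖v‖ ^ 2)) := by
  have h := (GaussianFourier.integrable_cexp_neg_mul_sq_norm_add (V := Euc d) (b := (b : ℂ))
      (by simpa using hb) 0 0).re
  refine h.congr (Filter.Eventually.of_forall fun v => ?_)
  simp only [zero_mul, add_zero]
  rw [show (-(b : ℂ) * (‖v‖ : ℂ) ^ 2) = ((-b * ‖v‖ ^ 2 : ℝ) : ℂ) by push_cast; ring]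
  simp only [RCLike.re_to_complex]
  exact Complex.exp_ofReal_re _

lemma tail_small (d : ℕ) (f : Euc d → ℝ≥0∞) (hfin : ∫⁻ v, f v < ⊤)
    {ε : ℝ≥0∞} (hε : 0 < ε) :
    ∃ r₀ : ℝ, ∀ r, r₀ ≤ r → ∫⁻ v in {v : Euc d | r < ‖v‖}, f v ≤ ε := by
  set ν := (volume : Measure (Euc d)).withDensity f with hνdef
  have hmeas : ∀ r : ℝ, MeasurableSet {v : Euc d | r < ‖v‖} := fun r =>
    measurableSet_lt measurable_const measurable_norm
  have hν : ∀ r : ℝ, ∫⁻ v in {v : Euc d | r < ‖v‖}, f v ≤ ν {v : Euc d | r < ‖v‖} := by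
    intro r
    rw [hνdef, withDensity_apply' f {v : Euc d | r < ‖v‖}]
  have hempty : (⋂ n : ℕ, {v : Euc d | (n : ℝ) < ‖v‖}) = ∅ := by
    ext x
    simp only [Set.mem_iInter, Set.mem_setOf_eq, Set.mem_empty_iff_false, iff_false, not_forall,
      not_lt]
    obtain ⟨n, hn⟩ := exists_nat_gt ‖x‖
    exact ⟨n, hn.le⟩
  have h0 : Tendsto (fun n : ℕ => ν {v : Euc d | (n : ℝ) < ‖v‖}) atTop (𝓝 0) := by
    have := tendsto_measure_iInter_atTop (μ := ν) (s := fun n : ℕ => {v : Euc d | (n : ℝ) < ‖v‖})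
      (fun n => (hmeas n).nullMeasurableSet)
      (fun i j hij x hx =>
        lt_of_le_of_lt (show (i : ℝ) ≤ (j : ℝ) by exact_mod_cast hij) hx)
      ⟨0, by
        refine ne_of_lt (lt_of_le_of_lt ?_ hfin)
        rw [hνdef, withDensity_apply' f]
        exact setLIntegral_le_lintegral _ _⟩
    rwa [hempty, measure_empty] at this
  obtain ⟨n, hn⟩ := (h0.eventually_lt_const hε).exists
  refine ⟨n, fun r hr => ?_⟩
  refine le_trans (hν r) (le_trans (measure_mono fun x hx => ?_) hn.le)
  exact lt_of_le_of_lt hr hx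

lemma mInv_bound (d : ℕ) (m : Euc d → ℝ)
    (hm : (∃ a s : ℝ, 0 < a ∧ s ∈ Set.Ioc (0 : ℝ) 1 ∧
            ∀ v : Euc d, m v = Real.exp (-(a * ‖v‖ ^ s)))
        ∨ (∃ β : ℝ, 0 < β ∧ ∀ v : Euc d, m v = (1 + ‖v‖ ^ β)⁻¹)) :
    ∃ c : ℝ, 0 ≤ c ∧ (∀ w : Euc d, 0 ≤ m w) ∧ (∀ w : Euc d, m w ≤ 1) ∧
      (∀ v : Euc d, 1 ≤ ‖v‖ → (m v)⁻¹ ≤ Real.exp (c * ‖v‖)) := by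
  rcases hm with ⟨a, s, ha, hs, hmv⟩ | ⟨β, hβ, hmv⟩
  · refine ⟨a, ha.le, fun w => by rw [hmv]; exact (Real.exp_pos _).le, fun w => ?_, fun v hv => ?_⟩
    · rw [hmv]
      refine Real.exp_le_one_iff.mpr ?_
      simp only [neg_nonpos]
      exact mul_nonneg ha.le (Real.rpow_nonneg (norm_nonneg _) _)
    · rw [hmv, ← Real.exp_neg, neg_neg]
      refine Real.exp_le_exp.mpr (mul_le_mul_of_nonneg_left ?_ ha.le)
      calc ‖v‖ ^ s ≤ ‖v‖ ^ (1 : ℝ) :=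
            Real.rpow_le_rpow_of_exponent_le hv hs.2
        _ = ‖v‖ := Real.rpow_one _
  · refine ⟨β + 1, by linarith, fun w => ?_, fun w => ?_, fun v hv => ?_⟩
    · rw [hmv]
      have := Real.rpow_nonneg (norm_nonneg w) β
      positivity
    · rw [hmv]
      refine inv_le_one_of_one_le₀ ?_
      have := Real.rpow_nonneg (norm_nonneg w) β
      linarith
    · rw [hmv, inv_inv]
      have hx : (0 : ℝ) < ‖v‖ := lt_of_lt_of_le one_pos hv
      have h1 : (1 : ℝ) ≤ ‖v‖ ^ β := Real.one_le_rpow hv hβ.le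
      have h2 : ‖v‖ ^ β ≤ Real.exp (β * ‖v‖) := by
        rw [Real.rpow_def_of_pos hx]
        refine Real.exp_le_exp.mpr ?_
        nlinarith [Real.log_le_sub_one_of_pos hx, hβ.le]
      have h3 : (2 : ℝ) ≤ Real.exp 1 := by
        linarith [Real.add_one_le_exp (1 : ℝ)]
      calc 1 + ‖v‖ ^ β ≤ 2 * ‖v‖ ^ β := by linarith
        _ ≤ Real.exp 1 * Real.exp (β * ‖v‖) := by
            refine mul_le_mul h3 h2 (Real.rpow_nonneg (norm_nonneg _) _) (Real.exp_nonneg _)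
        _ = Real.exp (1 + β * ‖v‖) := (Real.exp_add _ _).symm
        _ ≤ Real.exp ((β + 1) * ‖v‖) := by
            refine Real.exp_le_exp.mpr ?_
            nlinarith

/-- The tail estimate (DP22r) on the region `|w| ≤ r/2`. -/
theorem tail_estimate_DP22r
    (d : ℕ) (hd : 3 ≤ d) (γ : ℝ) (hγ : γ ∈ Set.Icc (0 : ℝ) ((d : ℝ) - 2))
    (m : Euc d → ℝ)
    (hm : (∃ a s : ℝ, 0 < a ∧ s ∈ Set.Ioc (0 : ℝ) 1 ∧
            ∀ v : Euc d, m v = Real.exp (-(a * ‖v‖ ^ s)))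
        ∨ (∃ β : ℝ, 0 < β ∧ ∀ v : Euc d, m v = (1 + ‖v‖ ^ β)⁻¹)) :
    ∀ ε : ℝ, 0 < ε → ∃ r₀ : ℝ, ∀ r : ℝ, r₀ ≤ r → ∀ w : Euc d, ‖w‖ ≤ r / 2 →
      ENNReal.ofReal (m w / (1 + ‖w‖) ^ γ) *
        ∫⁻ v in {v : Euc d | r < ‖v‖}, ENNReal.ofReal (kker d γ v w * (m v)⁻¹)
        ≤ ENNReal.ofReal ε := by
  intro ε hε
  obtain ⟨c, hc, hm0, hm1, hminv⟩ := mInv_bound d m hm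
  set C : ℝ := 2 ^ (d - 1) * (2 * π) ^ (-(1 : ℝ) / 2) with hCdef
  have hC : 0 < C := by
    refine mul_pos (pow_pos two_pos _) (Real.rpow_pos_of_pos ?_ _)
    positivity
  -- the Gaussian dominating function
  set g : Euc d → ℝ≥0∞ := fun v => ENNReal.ofReal (C * Real.exp (-(1 / 64) * ‖v‖ ^ 2))
    with hgdef
  have hgint : ∫⁻ v, g v < ⊤ := by
    have hint : Integrable (fun v : Euc d => C * Real.exp (-(1 / 64 : ℝ) * ‖v‖ ^ 2)) :=
      (integrable_gauss d (by norm_num : (0:ℝ) < 1/64)).const_mul C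
    exact hint.lintegral_lt_top
  obtain ⟨r₁, hr₁⟩ := tail_small d g hgint (ENNReal.ofReal_pos.mpr hε)
  refine ⟨max r₁ (max (64 * (c + 1)) 2), fun r hr w hw => ?_⟩
  have hrr₁ : r₁ ≤ r := le_trans (le_max_left _ _) hr
  have hrc : 64 * (c + 1) ≤ r := le_trans (le_trans (le_max_left _ _) (le_max_right _ _)) hr
  have hr2 : (2 : ℝ) ≤ r := le_trans (le_trans (le_max_right _ _) (le_max_right _ _)) hr
  -- front factor at most 1
  have hfront : ENNReal.ofReal (m w / (1 + ‖w‖) ^ γ) ≤ 1 := by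
    refine ENNReal.ofReal_le_one.mpr ?_
    have h1 : (1 : ℝ) ≤ (1 + ‖w‖) ^ γ :=
      Real.one_le_rpow (by linarith [norm_nonneg w]) hγ.1
    calc m w / (1 + ‖w‖) ^ γ ≤ m w := div_le_self (hm0 w) h1
      _ ≤ 1 := hm1 w
  -- pointwise bound of the integrand on the tail region
  have hpt : ∀ v : Euc d, r < ‖v‖ →
      kker d γ v w * (m v)⁻¹ ≤ C * Real.exp (-(1 / 64) * ‖v‖ ^ 2) := by
    intro v hv
    have hv2 : (2 : ℝ) < ‖v‖ := lt_of_le_of_lt hr2 hv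
    have hv1 : (1 : ℝ) ≤ ‖v‖ := by linarith
    have hvw : ‖v‖ / 2 ≤ ‖v - w‖ := by
      have := norm_sub_norm_le v w
      have hw' : ‖w‖ ≤ ‖v‖ / 2 := le_trans hw (by linarith)
      linarith
    have hvwpos : (0 : ℝ) < ‖v - w‖ := by linarith
    have hvw1 : (1 : ℝ) ≤ ‖v - w‖ := by linarith
    -- exponential factor bound
    have hE : Real.exp (-(1 / 8) * (‖v - w‖ + (‖v‖ ^ 2 - ‖w‖ ^ 2) / ‖v - w‖) ^ 2)
        ≤ Real.exp (-(1 / 32) * ‖v‖ ^ 2) := by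
      refine Real.exp_le_exp.mpr ?_
      have hwv : ‖w‖ ≤ ‖v‖ := le_trans hw (by linarith)
      have hnum : (0 : ℝ) ≤ (‖v‖ ^ 2 - ‖w‖ ^ 2) / ‖v - w‖ := by
        refine div_nonneg ?_ hvwpos.le
        nlinarith [norm_nonneg w]
      have hEE : ‖v‖ / 2 ≤ ‖v - w‖ + (‖v‖ ^ 2 - ‖w‖ ^ 2) / ‖v - w‖ := by linarith
      nlinarith [norm_nonneg v]
    -- kernel bound
    have hk : kker d γ v w ≤ C * Real.exp (-(1 / 32) * ‖v‖ ^ 2) := by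
      rw [kker, kHS, ← hCdef]
      have hrp : ‖v - w‖ ^ (γ - ((d : ℝ) - 2)) ≤ 1 :=
        Real.rpow_le_one_of_one_le_of_nonpos hvw1 (by linarith [hγ.2])
      have hinv : ‖v - w‖⁻¹ ≤ 1 := inv_le_one_of_one_le₀ hvw1
      have hrp0 : (0 : ℝ) ≤ ‖v - w‖ ^ (γ - ((d : ℝ) - 2)) :=
        Real.rpow_nonneg (norm_nonneg _) _
      calc ‖v - w‖ ^ (γ - ((d : ℝ) - 2)) *
            (C * ‖v - w‖⁻¹ *
              Real.exp (-(1 / 8) * (‖v - w‖ + (‖v‖ ^ 2 - ‖w‖ ^ 2) / ‖v - w‖) ^ 2))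
          ≤ 1 * (C * 1 * Real.exp (-(1 / 32) * ‖v‖ ^ 2)) := by
            refine mul_le_mul hrp ?_ ?_ one_pos.le
            · refine mul_le_mul (mul_le_mul le_rfl hinv (inv_nonneg.mpr hvwpos.le) hC.le)
                hE (Real.exp_nonneg _) (by positivity)
            · positivity
        _ = C * Real.exp (-(1 / 32) * ‖v‖ ^ 2) := by ring
    -- weight bound
    have hmv : (m v)⁻¹ ≤ Real.exp (c * ‖v‖) := hminv v hv1
    have hk0 : 0 ≤ kker d γ v w := by
      rw [kker, kHS]
      positivity
    have hmv0 : 0 ≤ (m v)⁻¹ := inv_nonneg.mpr (hm0 v)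
    calc kker d γ v w * (m v)⁻¹
        ≤ (C * Real.exp (-(1 / 32) * ‖v‖ ^ 2)) * Real.exp (c * ‖v‖) := by
          exact mul_le_mul hk hmv hmv0 (by positivity)
      _ = C * Real.exp (-(1 / 32) * ‖v‖ ^ 2 + c * ‖v‖) := by
          rw [mul_assoc, ← Real.exp_add]
      _ ≤ C * Real.exp (-(1 / 64) * ‖v‖ ^ 2) := by
          refine mul_le_mul_of_nonneg_left (Real.exp_le_exp.mpr ?_) hC.le
          have h64 : 64 * c ≤ ‖v‖ := by linarith
          nlinarith
  -- assemble
  have hmono : (∫⁻ v in {v : Euc d | r < ‖v‖}, ENNReal.ofReal (kker d γ v w * (m v)⁻¹))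
      ≤ ∫⁻ v in {v : Euc d | r < ‖v‖}, g v := by
    refine setLIntegral_mono' (measurableSet_lt measurable_const measurable_norm) ?_
    intro v hv
    exact ENNReal.ofReal_le_ofReal (hpt v hv)
  calc ENNReal.ofReal (m w / (1 + ‖w‖) ^ γ) *
        ∫⁻ v in {v : Euc d | r < ‖v‖}, ENNReal.ofReal (kker d γ v w * (m v)⁻¹)
      ≤ 1 * ∫⁻ v in {v : Euc d | r < ‖v‖}, g v := mul_le_mul' hfront hmono
    _ = ∫⁻ v in {v : Euc d | r < ‖v‖}, g v := one_mul _
    _ ≤ ENNReal.ofReal ε := hr₁ r hrr₁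

end
end

section
/- Let d ≥ 1, let k : ℝ^d × ℝ^d → [0,∞) be measurable, set Σ(v) = ∫_{ℝ^d} k(w,v) dw (integration over the first argument), and assume there exists Σ_max > 0 with Σ(v) ≤ Σ_max for almost every v. Then for every real α ≠ 0 and every φ ∈ L¹(ℝ^d; ℂ), ∫_{ℝ^d} | ∫_{ℝ^d} k(v,w) (iα + Σ(w))^{-1} φ(w) dw | dv ≤ (Σ_max / √(α² + Σ_max²)) ∫_{ℝ^d} |φ(w)| dw. -/
/-!
Swapping the order of integration (Tonelli) bounds the `L¹` norm of `v ↦ ∫ k(v,w) ψ(w) dw` by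
`∫ Σ(w) |ψ(w)| dw`. With `ψ = (iα + Σ)⁻¹ φ` each column contributes the factor
`Σ(w) / |iα + Σ(w)| = Σ(w) / √(α² + Σ(w)²)`, which is increasing in `Σ(w)` and hence at most
`Σ_max / √(α² + Σ_max²)`.
-/

open MeasureTheory Real Set Filter ENNReal

noncomputable section

theorem div_sqrt_add_sq_le_div_sqrt_add_sq {a s M : ℝ} (ha : 0 ≤ a) (hs : 0 ≤ s) (hsM : s ≤ M) :
    s / √(a + s ^ 2) ≤ M / √(a + M ^ 2) := by
  obtain rfl | hs := hs.eq_or_lt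
  · rw [zero_div]
    exact div_nonneg hsM (sqrt_nonneg _)
  have hM : 0 < M := hs.trans_le hsM
  rw [div_le_div_iff₀ (by positivity) (by positivity),
    ← pow_le_pow_iff_left₀ (by positivity) (by positivity) two_ne_zero,
    mul_pow, mul_pow, sq_sqrt (by positivity), sq_sqrt (by positivity)]
  nlinarith [mul_le_mul_of_nonneg_left (pow_le_pow_left₀ hs.le hsM 2) ha]

namespace Complex

theorem norm_I_mul_add_ofReal (α s : ℝ) : ‖I * α + s‖ = √(α ^ 2 + s ^ 2) := by
  rw [add_comm, mul_comm, norm_add_mul_I, add_comm]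

theorem ofReal_mul_enorm_div_I_mul_add_le {α s M : ℝ} (hs : 0 ≤ s) (hsM : s ≤ M) (c : ℂ) :
    ENNReal.ofReal s * ‖c / (I * α + s)‖ₑ ≤ ENNReal.ofReal (M / √(α ^ 2 + M ^ 2)) * ‖c‖ₑ := by
  rw [← ofReal_norm, ← ofReal_norm, ← ENNReal.ofReal_mul hs,
    ← ENNReal.ofReal_mul (div_nonneg (hs.trans hsM) (sqrt_nonneg _))]
  refine ENNReal.ofReal_le_ofReal ?_
  rw [norm_div, norm_I_mul_add_ofReal, mul_div_assoc', mul_div_right_comm]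
  exact mul_le_mul_of_nonneg_right (div_sqrt_add_sq_le_div_sqrt_add_sq (sq_nonneg α) hs hsM) (norm_nonneg c)

end Complex

section IntegralOperator

variable {X Y E G : Type*} [MeasurableSpace X] [MeasurableSpace Y]
  [NormedAddCommGroup E] [NormedSpace ℝ E] [NormedAddCommGroup G]
  {μ : Measure X} {ν : Measure Y} [SFinite μ] [SFinite ν]

theorem lintegral_enorm_integral_le_lintegral_lintegral_enorm {F : X → Y → E}
    (hF : AEStronglyMeasurable (Function.uncurry F) (μ.prod ν)) :
    ∫⁻ x, ‖∫ y, F x y ∂ν‖ₑ ∂μ ≤ ∫⁻ y, ∫⁻ x, ‖F x y‖ₑ ∂μ ∂ν :=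
  calc ∫⁻ x, ‖∫ y, F x y ∂ν‖ₑ ∂μ
      ≤ ∫⁻ x, ∫⁻ y, ‖F x y‖ₑ ∂ν ∂μ := lintegral_mono fun _ ↦ enorm_integral_le_lintegral_enorm _
    _ = ∫⁻ y, ∫⁻ x, ‖F x y‖ₑ ∂μ ∂ν := lintegral_lintegral_swap hF.enorm

theorem integral_norm_integral_le_mul_integral_norm {F : X → Y → E} {φ : Y → G} {C : ℝ}
    (hC : 0 ≤ C) (hF : AEStronglyMeasurable (Function.uncurry F) (μ.prod ν))
    (hφ : Integrable φ ν)
    (hcol : ∀ᵐ y ∂ν, ∫⁻ x, ‖F x y‖ₑ ∂μ ≤ ENNReal.ofReal C * ‖φ y‖ₑ) :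
    ∫ x, ‖∫ y, F x y ∂ν‖ ∂μ ≤ C * ∫ y, ‖φ y‖ ∂ν := by
  rw [integral_norm_eq_lintegral_enorm (f := fun x ↦ ∫ y, F x y ∂ν) hF.integral_prod_right']
  refine ENNReal.toReal_le_of_le_ofReal (by positivity) ?_
  calc ∫⁻ x, ‖∫ y, F x y ∂ν‖ₑ ∂μ
      ≤ ∫⁻ y, ∫⁻ x, ‖F x y‖ₑ ∂μ ∂ν := lintegral_enorm_integral_le_lintegral_lintegral_enorm hF
    _ ≤ ∫⁻ y, ENNReal.ofReal C * ‖φ y‖ₑ ∂ν := lintegral_mono_ae hcol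
    _ = ENNReal.ofReal (C * ∫ y, ‖φ y‖ ∂ν) := by
      rw [lintegral_const_mul' _ _ ofReal_ne_top, ENNReal.ofReal_mul hC,
        ofReal_integral_norm_eq_lintegral_enorm hφ]

end IntegralOperator

theorem gain_resolvent_estimate_general
    (d : ℕ) (k : Euc d → Euc d → ℝ)
    (hk : Measurable (Function.uncurry k)) (hkpos : ∀ v w, 0 ≤ k v w)
    (Sig : Euc d → ℝ) (hSigmeas : Measurable Sig) (hSigpos : ∀ v, 0 ≤ Sig v)
    (hSig : ∀ v : Euc d, ∫⁻ w : Euc d, ENNReal.ofReal (k w v) = ENNReal.ofReal (Sig v))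
    (Smax : ℝ) (hSmax : 0 < Smax) (hSigle : ∀ᵐ v : Euc d ∂volume, Sig v ≤ Smax) :
    ∀ α : ℝ, α ≠ 0 → ∀ φ : Euc d → ℂ, Integrable φ →
      ∫ v : Euc d, ‖∫ w : Euc d, (k v w : ℂ) / (Complex.I * (α : ℂ) + (Sig w : ℂ)) * φ w‖
        ≤ (Smax / Real.sqrt (α ^ 2 + Smax ^ 2)) * ∫ w : Euc d, ‖φ w‖ := by
  intro α _ φ hφ
  have hF : AEStronglyMeasurable
      (Function.uncurry fun v w ↦ (k v w : ℂ) / (Complex.I * α + Sig w) * φ w)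
      (volume.prod volume) := by
    refine AEStronglyMeasurable.mul (Measurable.aestronglyMeasurable ?_) hφ.1.comp_snd
    exact (Complex.measurable_ofReal.comp hk).div
      (measurable_const.add (Complex.measurable_ofReal.comp (hSigmeas.comp measurable_snd)))
  refine integral_norm_integral_le_mul_integral_norm (by positivity) hF hφ ?_
  filter_upwards [hSigle] with w hw
  calc ∫⁻ v, ‖(k v w : ℂ) / (Complex.I * α + Sig w) * φ w‖ₑ
      = ENNReal.ofReal (Sig w) * ‖φ w / (Complex.I * α + Sig w)‖ₑ := by
        simp_rw [div_mul_eq_mul_div, mul_div_assoc, ← Complex.real_smul, enorm_smul,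
          Real.enorm_eq_ofReal (hkpos _ w)]
        rw [lintegral_mul_const' _ _ enorm_ne_top, hSig]
    _ ≤ _ := Complex.ofReal_mul_enorm_div_I_mul_add_le (hSigpos w) hw _

/-- The key resolvent estimate `‖K R(iα, T)‖ ≤ Σ_max/√(α² + Σ_max²)` on `L¹(ℝ^d; ℂ)`. -/
theorem gain_resolvent_estimate
    (d : ℕ) (hd : 1 ≤ d) (k : Euc d → Euc d → ℝ)
    (hk : Measurable (Function.uncurry k)) (hkpos : ∀ v w, 0 ≤ k v w)
    (Sig : Euc d → ℝ) (hSigmeas : Measurable Sig) (hSigpos : ∀ v, 0 ≤ Sig v)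
    (hSig : ∀ v : Euc d, ∫⁻ w : Euc d, ENNReal.ofReal (k w v) = ENNReal.ofReal (Sig v))
    (Smax : ℝ) (hSmax : 0 < Smax) (hSigle : ∀ᵐ v : Euc d ∂volume, Sig v ≤ Smax) :
    ∀ α : ℝ, α ≠ 0 → ∀ φ : Euc d → ℂ, Integrable φ →
      ∫ v : Euc d, ‖∫ w : Euc d, (k v w : ℂ) / (Complex.I * (α : ℂ) + (Sig w : ℂ)) * φ w‖
        ≤ (Smax / Real.sqrt (α ^ 2 + Smax ^ 2)) * ∫ w : Euc d, ‖φ w‖ :=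
  gain_resolvent_estimate_general d k hk hkpos Sig hSigmeas hSigpos hSig Smax hSmax hSigle

end
end

section
/- Let d ≥ 1, let k : ℝ^d × ℝ^d → [0,∞) be measurable, let Σ : ℝ^d → [0,∞) be measurable with Σ(v) = ∫_{ℝ^d} k(w,v) dw (integration over the first argument) for almost every v, and assume there exists Σ_max > 0 with Σ(v) ≤ Σ_max for almost every v. Then for every real α ≠ 0 and every g ∈ L¹(ℝ^d; ℂ) there exists a unique f ∈ L¹(ℝ^d; ℂ) such that iα f(v) + Σ(v) f(v) - ∫_{ℝ^d} k(v,w) f(w) dw = g(v) for almost every v, and moreover ∫_{ℝ^d} |f| ≤ ϑ(|α|) ∫_{ℝ^d} |g|, where ϑ(r) = (1/r) · (1 - Σ_max/√(r² + Σ_max²))^{-1}. In particular every nonzero purely imaginary number belongs to the resolvent set of the operator L f = K f - Σ f on L¹(ℝ^d; ℂ), with ‖R(iα, L)‖ ≤ ϑ(|α|). -/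
open MeasureTheory Real Set Filter ENNReal

noncomputable section

/-!
Put `m(v) = iα + Σ(v)`. The equation reads `m f - K f = g`, and the substitution `u = m f` turns
it into the fixed-point problem `u = g + K (u / m)` in `L¹`. By Tonelli and `Σ(w) = ∫ k(v, w) dv`,
`‖K h‖₁ ≤ ∫ Σ |h|`; since `Σ / |m| = Σ / √(Σ² + α²)` increases with `Σ ≤ Σ_max`, the map
`u ↦ K (u / m)` is a contraction of `L¹` with constant `q = Σ_max / √(α² + Σ_max²) < 1`.
Banach's fixed-point theorem gives a unique `u` with `‖u‖₁ ≤ ‖g‖₁ / (1 - q)`, and `|m| ≥ |α|`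
turns this into the bound on `f = u / m`.
-/

open scoped NNReal

section L1Contraction

variable {X E : Type*} [MeasurableSpace X] {μ : Measure X} [NormedAddCommGroup E]

theorem ae_eq_of_lintegral_enorm_sub_le_mul {f f' u u' : X → E} {c : ℝ≥0∞}
    (hf : AEStronglyMeasurable f μ) (hf' : AEStronglyMeasurable f' μ)
    (h : ∫⁻ x, ‖f x - f' x‖ₑ ∂μ ≤ c * ∫⁻ x, ‖u x - u' x‖ₑ ∂μ) (hu : u =ᵐ[μ] u') :
    f =ᵐ[μ] f' := by
  have h0 : ∫⁻ x, ‖u x - u' x‖ₑ ∂μ = ∫⁻ _, 0 ∂μ :=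
    lintegral_congr_ae (hu.mono fun x hx => by simp [hx])
  rw [h0, lintegral_zero, mul_zero, nonpos_iff_eq_zero] at h
  exact ((lintegral_eq_zero_iff' (hf.sub hf').enorm).1 h).mono fun x hx =>
    sub_eq_zero.1 (enorm_eq_zero.1 hx)

variable [CompleteSpace E]

theorem exists_unique_integrable_eq_add_of_lipschitz {T : (X → E) → X → E} {q : ℝ≥0}
    (hq : q < 1) (hT_int : ∀ u, Integrable u μ → Integrable (T u) μ)
    (hT_zero : T 0 =ᵐ[μ] 0)
    (hT_lip : ∀ u u', Integrable u μ → Integrable u' μ →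
      ∫⁻ x, ‖T u x - T u' x‖ₑ ∂μ ≤ q * ∫⁻ x, ‖u x - u' x‖ₑ ∂μ)
    {g : X → E} (hg : Integrable g μ) :
    ∃ u, Integrable u μ ∧ u =ᵐ[μ] g + T u ∧
      ∫ x, ‖u x‖ ∂μ ≤ (1 - (q : ℝ))⁻¹ * ∫ x, ‖g x‖ ∂μ ∧
      ∀ u', Integrable u' μ → u' =ᵐ[μ] g + T u' → u' =ᵐ[μ] u := by
  -- `T` acts on functions, not on `L¹` classes; the Lipschitz bound makes it well defined on them.
  have hT_congr : ∀ u u', Integrable u μ → Integrable u' μ → u =ᵐ[μ] u' → T u =ᵐ[μ] T u' :=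
    fun u u' hu hu' => ae_eq_of_lintegral_enorm_sub_le_mul (hT_int u hu).aestronglyMeasurable
      (hT_int u' hu').aestronglyMeasurable (hT_lip u u' hu hu')
  let Φ : (X →₁[μ] E) → X →₁[μ] E := fun u =>
    (hg.add (hT_int u (L1.integrable_coeFn u))).toL1 _
  have hΦ : ∀ u, Φ u =ᵐ[μ] g + T u := fun u => Integrable.coeFn_toL1 _
  have hΦ_contr : ContractingWith q Φ := by
    refine ⟨hq, fun u u' => ?_⟩
    rw [Integrable.edist_toL1_toL1, L1.edist_def]
    simpa only [Pi.add_apply, edist_eq_enorm_sub, add_sub_add_left_eq_sub] using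
      hT_lip _ _ (L1.integrable_coeFn u) (L1.integrable_coeFn u')
  set U := ContractingWith.fixedPoint Φ hΦ_contr
  have hU : Φ U = U := ContractingWith.fixedPoint_isFixedPt hΦ_contr
  refine ⟨U, L1.integrable_coeFn U, ?_, ?_, fun u' hu' hsol => ?_⟩
  · have h := hΦ U
    rwa [hU] at h
  · have hΦ0 : Φ 0 = hg.toL1 g := by
      rw [Integrable.toL1_eq_toL1_iff]
      filter_upwards [hT_congr _ _ (L1.integrable_coeFn 0) (integrable_zero X E μ)
        (Lp.coeFn_zero E 1 μ), hT_zero] with x h h0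
      simp only [Pi.add_apply, h, h0, Pi.zero_apply, add_zero]
    have h := hΦ_contr.dist_fixedPoint_le 0
    rwa [hΦ0, dist_zero_left, dist_zero_left, L1.norm_eq_integral_norm,
      L1.norm_of_fun_eq_integral_norm, div_eq_inv_mul] at h
  · have hfix : Φ (hu'.toL1 u') = hu'.toL1 u' := by
      rw [Integrable.toL1_eq_toL1_iff]
      filter_upwards [hT_congr _ _ (L1.integrable_coeFn _) hu' hu'.coeFn_toL1, hsol]
        with x h h'
      simp only [Pi.add_apply, h, h']
    have hU' : hu'.toL1 u' = U := hΦ_contr.fixedPoint_unique hfix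
    rw [← hU']
    exact hu'.coeFn_toL1.symm

end L1Contraction

section KernelOperator

variable {X : Type*} [MeasurableSpace X]

structure HasCollisionFrequency (μ : Measure X) (k : X → X → ℝ) (σ : X → ℝ) : Prop where
  measurable : Measurable (Function.uncurry k)
  nonneg : ∀ v w, 0 ≤ k v w
  lintegral_eq : ∀ᵐ w ∂μ, ∫⁻ v, ENNReal.ofReal (k v w) ∂μ = ENNReal.ofReal (σ w)

def kernelOp (μ : Measure X) (k : X → X → ℝ) (h : X → ℂ) (v : X) : ℂ :=
  ∫ w, (k v w : ℂ) * h w ∂μ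

variable {μ : Measure X} [SFinite μ] {k : X → X → ℝ} {σ : X → ℝ}

namespace HasCollisionFrequency

theorem lintegral_lintegral_enorm_mul (hkσ : HasCollisionFrequency μ k σ) {h : X → ℂ}
    (hh : AEStronglyMeasurable h μ) :
    ∫⁻ v, ∫⁻ w, ‖(k v w : ℂ) * h w‖ₑ ∂μ ∂μ = ∫⁻ w, ENNReal.ofReal (σ w) * ‖h w‖ₑ ∂μ := by
  have hk_enorm : ∀ v w, ‖(k v w : ℂ)‖ₑ = ENNReal.ofReal (k v w) := fun v w => by
    rw [← ofReal_norm, Complex.norm_real, Real.norm_of_nonneg (hkσ.nonneg v w)]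
  simp_rw [enorm_mul, hk_enorm]
  rw [lintegral_lintegral_swap ((ENNReal.measurable_ofReal.comp hkσ.measurable).aemeasurable.mul
    (hh.enorm.comp_quasiMeasurePreserving Measure.quasiMeasurePreserving_snd))]
  refine lintegral_congr_ae (hkσ.lintegral_eq.mono fun w hw => ?_)
  have hk_w : Measurable fun v => ENNReal.ofReal (k v w) :=
    ENNReal.measurable_ofReal.comp (hkσ.measurable.comp measurable_prodMk_right)
  simp only [lintegral_mul_const _ hk_w, hw]

theorem integrable_prod_mul (hkσ : HasCollisionFrequency μ k σ) {h : X → ℂ}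
    (hh : AEStronglyMeasurable h μ) (hfin : ∫⁻ w, ENNReal.ofReal (σ w) * ‖h w‖ₑ ∂μ ≠ ∞) :
    Integrable (fun p : X × X => (k p.1 p.2 : ℂ) * h p.2) (μ.prod μ) := by
  have hmeas : AEStronglyMeasurable (fun p : X × X => (k p.1 p.2 : ℂ) * h p.2) (μ.prod μ) :=
    (Complex.measurable_ofReal.comp hkσ.measurable).aestronglyMeasurable.mul
      (hh.comp_quasiMeasurePreserving Measure.quasiMeasurePreserving_snd)
  refine ⟨hmeas, ?_⟩
  rw [HasFiniteIntegral, lintegral_prod _ hmeas.enorm, hkσ.lintegral_lintegral_enorm_mul hh]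
  exact hfin.lt_top

theorem lintegral_enorm_kernelOp_le (hkσ : HasCollisionFrequency μ k σ) {h : X → ℂ}
    (hh : AEStronglyMeasurable h μ) :
    ∫⁻ v, ‖kernelOp μ k h v‖ₑ ∂μ ≤ ∫⁻ w, ENNReal.ofReal (σ w) * ‖h w‖ₑ ∂μ :=
  (lintegral_mono fun _ => enorm_integral_le_lintegral_enorm _).trans_eq
    (hkσ.lintegral_lintegral_enorm_mul hh)

end HasCollisionFrequency

theorem kernelOp_sub_ae {h₁ h₂ : X → ℂ}
    (hh₁ : Integrable (fun p : X × X => (k p.1 p.2 : ℂ) * h₁ p.2) (μ.prod μ))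
    (hh₂ : Integrable (fun p : X × X => (k p.1 p.2 : ℂ) * h₂ p.2) (μ.prod μ)) :
    kernelOp μ k (h₁ - h₂) =ᵐ[μ] kernelOp μ k h₁ - kernelOp μ k h₂ := by
  filter_upwards [hh₁.prod_right_ae, hh₂.prod_right_ae] with v hv₁ hv₂
  simp only [kernelOp, Pi.sub_apply, mul_sub]
  exact integral_sub hv₁ hv₂

end KernelOperator

section ImaginaryShift

open Complex

theorem norm_I_mul_add (α s : ℝ) : ‖I * α + s‖ = √(s ^ 2 + α ^ 2) := by
  rw [add_comm, mul_comm, norm_add_mul_I]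

theorem abs_le_norm_I_mul_add (α s : ℝ) : |α| ≤ ‖I * α + s‖ := by
  simpa using abs_im_le_norm (I * α + s)

theorem norm_I_mul_add_le (α s : ℝ) : ‖I * α + s‖ ≤ |α| + |s| := by
  simpa [add_comm] using norm_le_abs_re_add_abs_im (I * α + s)

theorem I_mul_add_ne_zero {α : ℝ} (hα : α ≠ 0) (s : ℝ) : I * α + s ≠ 0 :=
  norm_pos_iff.1 ((abs_pos.2 hα).trans_le (abs_le_norm_I_mul_add α s))

theorem norm_div_I_mul_add_le {α : ℝ} (hα : α ≠ 0) (s : ℝ) (z : ℂ) :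
    ‖z / (I * α + s)‖ ≤ |α|⁻¹ * ‖z‖ := by
  rw [norm_div, div_eq_inv_mul]
  gcongr
  exact abs_le_norm_I_mul_add α s

theorem div_norm_I_mul_add_le {α s S : ℝ} (hα : α ≠ 0) (hs : 0 ≤ s) (hsS : s ≤ S) :
    s / ‖I * α + s‖ ≤ S / ‖I * α + S‖ := by
  have hpos : ∀ t : ℝ, 0 < ‖I * α + t‖ := fun t => norm_pos_iff.2 (I_mul_add_ne_zero hα t)
  have hsq : ∀ t : ℝ, ‖I * α + t‖ ^ 2 = t ^ 2 + α ^ 2 := fun t => by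
    rw [norm_I_mul_add, sq_sqrt (by positivity)]
  rw [div_le_div_iff₀ (hpos s) (hpos S)]
  refine (pow_le_pow_iff_left₀ (by positivity) (by positivity [hs.trans hsS]) two_ne_zero).1 ?_
  rw [mul_pow, mul_pow, hsq, hsq]
  nlinarith [mul_le_mul hsS hsS hs (hs.trans hsS), sq_nonneg α]

theorem div_norm_I_mul_add_lt_one {α : ℝ} (hα : α ≠ 0) (S : ℝ) : S / ‖I * α + S‖ < 1 := by
  have h : |S| < ‖I * α + S‖ := by
    simpa using abs_re_lt_norm.2 (by simpa using hα : (I * α + S).im ≠ 0)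
  exact (div_lt_one ((abs_nonneg S).trans_lt h)).2 ((le_abs_self S).trans_lt h)

theorem ofReal_mul_enorm_div_I_mul_add_le {α s S : ℝ} (hα : α ≠ 0) (hs : 0 ≤ s) (hsS : s ≤ S)
    (z : ℂ) :
    ENNReal.ofReal s * ‖z / (I * α + s)‖ₑ ≤ ENNReal.ofReal (S / ‖I * α + S‖) * ‖z‖ₑ := by
  rw [← ofReal_norm, ← ofReal_norm, ← ENNReal.ofReal_mul hs,
    ← ENNReal.ofReal_mul (div_nonneg (hs.trans hsS) (norm_nonneg _))]
  refine ENNReal.ofReal_le_ofReal ?_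
  rw [norm_div, mul_div_assoc', mul_div_right_comm]
  exact mul_le_mul_of_nonneg_right (div_norm_I_mul_add_le hα hs hsS) (norm_nonneg z)

end ImaginaryShift

section Resolvent

open Complex

variable {X : Type*} [MeasurableSpace X] {μ : Measure X} {k : X → X → ℝ} {σ : X → ℝ}
  {α S : ℝ}

theorem integrable_div_I_mul_add (hσ_meas : Measurable σ) (hα : α ≠ 0) {u : X → ℂ}
    (hu : Integrable u μ) : Integrable (fun v => u v / (I * α + σ v)) μ :=
  (hu.norm.const_mul |α|⁻¹).mono' (hu.aestronglyMeasurable.div₀ (by fun_prop))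
    (ae_of_all _ fun _ => norm_div_I_mul_add_le hα _ _)

theorem lintegral_ofReal_mul_enorm_div_I_mul_add_le (hσ_nonneg : ∀ v, 0 ≤ σ v)
    (hσS : ∀ᵐ v ∂μ, σ v ≤ S) (hα : α ≠ 0) (u : X → ℂ) :
    ∫⁻ w, ENNReal.ofReal (σ w) * ‖u w / (I * α + σ w)‖ₑ ∂μ
      ≤ ENNReal.ofReal (S / ‖I * α + S‖) * ∫⁻ w, ‖u w‖ₑ ∂μ :=
  (lintegral_mono_ae (hσS.mono fun w hw =>
    ofReal_mul_enorm_div_I_mul_add_le hα (hσ_nonneg w) hw (u w))).trans_eq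
    (lintegral_const_mul' _ _ ENNReal.ofReal_ne_top)

variable [SFinite μ]

theorem HasCollisionFrequency.integrable_prod_mul_div (hkσ : HasCollisionFrequency μ k σ)
    (hσ_meas : Measurable σ) (hσ_nonneg : ∀ v, 0 ≤ σ v) (hσS : ∀ᵐ v ∂μ, σ v ≤ S) (hα : α ≠ 0)
    {u : X → ℂ} (hu : Integrable u μ) :
    Integrable (fun p : X × X => (k p.1 p.2 : ℂ) * (u p.2 / (I * α + σ p.2))) (μ.prod μ) :=
  hkσ.integrable_prod_mul (integrable_div_I_mul_add hσ_meas hα hu).aestronglyMeasurable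
    (ne_top_of_le_ne_top (ENNReal.mul_ne_top ENNReal.ofReal_ne_top hu.2.ne)
      (lintegral_ofReal_mul_enorm_div_I_mul_add_le hσ_nonneg hσS hα u))

theorem HasCollisionFrequency.lintegral_enorm_kernelOp_div_sub_le
    (hkσ : HasCollisionFrequency μ k σ) (hσ_meas : Measurable σ) (hσ_nonneg : ∀ v, 0 ≤ σ v)
    (hσS : ∀ᵐ v ∂μ, σ v ≤ S) (hα : α ≠ 0) {u u' : X → ℂ} (hu : Integrable u μ)
    (hu' : Integrable u' μ) :
    ∫⁻ v, ‖kernelOp μ k (fun w => u w / (I * α + σ w)) v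
        - kernelOp μ k (fun w => u' w / (I * α + σ w)) v‖ₑ ∂μ
      ≤ ENNReal.ofReal (S / ‖I * α + S‖) * ∫⁻ v, ‖u v - u' v‖ₑ ∂μ := by
  have hsub : (fun w => u w / (I * α + σ w)) - (fun w => u' w / (I * α + σ w))
      = fun w => (u w - u' w) / (I * α + σ w) := by
    funext w
    exact (sub_div _ _ _).symm
  calc _ = ∫⁻ v, ‖kernelOp μ k (fun w => (u w - u' w) / (I * α + σ w)) v‖ₑ ∂μ := by
        refine lintegral_congr_ae ((kernelOp_sub_ae (h₁ := fun w => u w / (I * α + σ w))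
          (h₂ := fun w => u' w / (I * α + σ w))
          (hkσ.integrable_prod_mul_div hσ_meas hσ_nonneg hσS hα hu)
          (hkσ.integrable_prod_mul_div hσ_meas hσ_nonneg hσS hα hu')).mono fun v hv => ?_)
        dsimp only
        rw [← hsub, hv, Pi.sub_apply]
    _ ≤ ∫⁻ w, ENNReal.ofReal (σ w) * ‖(u w - u' w) / (I * α + σ w)‖ₑ ∂μ :=
        hkσ.lintegral_enorm_kernelOp_le
          (integrable_div_I_mul_add hσ_meas hα (hu.sub hu')).aestronglyMeasurable
    _ ≤ _ := lintegral_ofReal_mul_enorm_div_I_mul_add_le hσ_nonneg hσS hα _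

theorem HasCollisionFrequency.exists_unique_integrable_I_mul_add_sub_kernelOp_eq
    (hkσ : HasCollisionFrequency μ k σ) (hσ_meas : Measurable σ) (hσ_nonneg : ∀ v, 0 ≤ σ v)
    (hS : 0 ≤ S) (hσS : ∀ᵐ v ∂μ, σ v ≤ S) (hα : α ≠ 0) {g : X → ℂ} (hg : Integrable g μ) :
    ∃ f, Integrable f μ ∧ (∀ᵐ v ∂μ, (I * α + σ v) * f v - kernelOp μ k f v = g v) ∧
      ∫ v, ‖f v‖ ∂μ ≤ |α|⁻¹ * (1 - S / ‖I * α + S‖)⁻¹ * ∫ v, ‖g v‖ ∂μ ∧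
      ∀ f', Integrable f' μ → (∀ᵐ v ∂μ, (I * α + σ v) * f' v - kernelOp μ k f' v = g v) →
        f' =ᵐ[μ] f := by
  set m : X → ℂ := fun v => I * α + σ v
  obtain ⟨u, hu, hu_eq, hu_le, hu_unique⟩ := exists_unique_integrable_eq_add_of_lipschitz
    (T := fun u => kernelOp μ k fun w => u w / m w)
    (Real.toNNReal_lt_one.2 (div_norm_I_mul_add_lt_one hα S))
    (fun u hu => (hkσ.integrable_prod_mul_div hσ_meas hσ_nonneg hσS hα hu).integral_prod_left)
    (ae_of_all _ fun v => by simp [kernelOp])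
    (fun u u' hu hu' => hkσ.lintegral_enorm_kernelOp_div_sub_le hσ_meas hσ_nonneg hσS hα hu hu')
    hg
  refine ⟨fun v => u v / m v, integrable_div_I_mul_add hσ_meas hα hu, ?_, ?_,
    fun f' hf' hf'_eq => ?_⟩
  · filter_upwards [hu_eq] with v hv
    rw [mul_div_cancel₀ _ (I_mul_add_ne_zero hα _), hv, Pi.add_apply, add_sub_cancel_right]
  · rw [Real.coe_toNNReal _ (div_nonneg hS (norm_nonneg _))] at hu_le
    calc ∫ v, ‖u v / m v‖ ∂μ
        ≤ ∫ v, |α|⁻¹ * ‖u v‖ ∂μ :=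
          integral_mono (integrable_div_I_mul_add hσ_meas hα hu).norm (hu.norm.const_mul _)
            fun v => norm_div_I_mul_add_le hα _ _
      _ = |α|⁻¹ * ∫ v, ‖u v‖ ∂μ := integral_const_mul _ _
      _ ≤ |α|⁻¹ * ((1 - S / ‖I * α + S‖)⁻¹ * ∫ v, ‖g v‖ ∂μ) := by gcongr
      _ = _ := (mul_assoc _ _ _).symm
  · have hm_le : ∀ᵐ v ∂μ, ‖m v‖ ≤ |α| + S := hσS.mono fun v hv =>
      (norm_I_mul_add_le α (σ v)).trans (by rw [abs_of_nonneg (hσ_nonneg v)]; linarith)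
    have hmf' : Integrable (fun v => m v * f' v) μ :=
      hf'.bdd_mul (by fun_prop : Measurable m).aestronglyMeasurable hm_le
    have h_div : (fun w => m w * f' w / m w) = f' :=
      funext fun w => mul_div_cancel_left₀ _ (I_mul_add_ne_zero hα _)
    have h_eq := hu_unique _ hmf' (by
      rw [h_div]
      filter_upwards [hf'_eq] with v hv
      rw [Pi.add_apply, ← hv, sub_add_cancel])
    filter_upwards [h_eq] with v hv
    rw [← hv, mul_div_cancel_left₀ _ (I_mul_add_ne_zero hα _)]

end Resolvent

theorem imaginary_axis_resolvent_general
    (d : ℕ) (k : Euc d → Euc d → ℝ)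
    (hk : Measurable (Function.uncurry k)) (hkpos : ∀ v w, 0 ≤ k v w)
    (Sig : Euc d → ℝ) (hSigmeas : Measurable Sig) (hSigpos : ∀ v, 0 ≤ Sig v)
    (hSig : ∀ᵐ v : Euc d ∂volume,
      ∫⁻ w : Euc d, ENNReal.ofReal (k w v) = ENNReal.ofReal (Sig v))
    (Smax : ℝ) (hSmax : 0 < Smax) (hSigle : ∀ᵐ v : Euc d ∂volume, Sig v ≤ Smax) :
    ∀ α : ℝ, α ≠ 0 → ∀ g : Euc d → ℂ, Integrable g →
      ∃ f : Euc d → ℂ, Integrable f ∧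
        (∀ᵐ v : Euc d ∂volume,
          Complex.I * (α : ℂ) * f v + (Sig v : ℂ) * f v
            - (∫ w : Euc d, (k v w : ℂ) * f w) = g v) ∧
        (∫ v : Euc d, ‖f v‖
          ≤ (1 / |α|) * (1 - Smax / Real.sqrt (α ^ 2 + Smax ^ 2))⁻¹ * ∫ v : Euc d, ‖g v‖) ∧
        ∀ f' : Euc d → ℂ, Integrable f' →
          (∀ᵐ v : Euc d ∂volume,
            Complex.I * (α : ℂ) * f' v + (Sig v : ℂ) * f' v
              - (∫ w : Euc d, (k v w : ℂ) * f' w) = g v) →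
          f' =ᵐ[volume] f := by
  intro α hα g hg
  have hkσ : HasCollisionFrequency volume k Sig := ⟨hk, hkpos, hSig⟩
  obtain ⟨f, hf, hf_eq, hf_le, hf_unique⟩ :=
    hkσ.exists_unique_integrable_I_mul_add_sub_kernelOp_eq hSigmeas hSigpos hSmax.le hSigle hα hg
  have hnorm : ‖Complex.I * α + Smax‖ = √(α ^ 2 + Smax ^ 2) := by
    rw [norm_I_mul_add, add_comm]
  refine ⟨f, hf, ?_, ?_, fun f' hf' hf'_eq => hf_unique f' hf' ?_⟩
  · simpa only [add_mul, kernelOp] using hf_eq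
  · rwa [one_div, ← hnorm]
  · simpa only [add_mul, kernelOp] using hf'_eq

/-- Nonzero purely imaginary numbers belong to the resolvent set of `L = K - Σ` on
`L¹(ℝ^d; ℂ)`, with the explicit resolvent bound `ϑ(|α|)`. -/
theorem imaginary_axis_resolvent
    (d : ℕ) (hd : 1 ≤ d) (k : Euc d → Euc d → ℝ)
    (hk : Measurable (Function.uncurry k)) (hkpos : ∀ v w, 0 ≤ k v w)
    (Sig : Euc d → ℝ) (hSigmeas : Measurable Sig) (hSigpos : ∀ v, 0 ≤ Sig v)
    (hSig : ∀ᵐ v : Euc d ∂volume,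
      ∫⁻ w : Euc d, ENNReal.ofReal (k w v) = ENNReal.ofReal (Sig v))
    (Smax : ℝ) (hSmax : 0 < Smax) (hSigle : ∀ᵐ v : Euc d ∂volume, Sig v ≤ Smax) :
    ∀ α : ℝ, α ≠ 0 → ∀ g : Euc d → ℂ, Integrable g →
      ∃ f : Euc d → ℂ, Integrable f ∧
        (∀ᵐ v : Euc d ∂volume,
          Complex.I * (α : ℂ) * f v + (Sig v : ℂ) * f v
            - (∫ w : Euc d, (k v w : ℂ) * f w) = g v) ∧
        (∫ v : Euc d, ‖f v‖
          ≤ (1 / |α|) * (1 - Smax / Real.sqrt (α ^ 2 + Smax ^ 2))⁻¹ * ∫ v : Euc d, ‖g v‖) ∧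
        ∀ f' : Euc d → ℂ, Integrable f' →
          (∀ᵐ v : Euc d ∂volume,
            Complex.I * (α : ℂ) * f' v + (Sig v : ℂ) * f' v
              - (∫ w : Euc d, (k v w : ℂ) * f' w) = g v) →
          f' =ᵐ[volume] f :=
  imaginary_axis_resolvent_general d k hk hkpos Sig hSigmeas hSigpos hSig Smax hSmax hSigle

end
end

section
/- Let d ≥ 2, γ > -d, and let b : [-1,1] → [0,∞) be measurable with ‖b‖_{L¹(S^{d-1})} < ∞. For every measurable f : ℝ^d → [0,∞] one has the mass conservation identity (as an equality in [0,∞]): ∫_{ℝ^d} ∫_{ℝ^d} ∫_{S^{d-1}} |v-v_*|^γ b(cos θ) f(v') M(v_*') dσ dv_* dv = ∫_{ℝ^d} ∫_{ℝ^d} ∫_{S^{d-1}} |v-v_*|^γ b(cos θ) f(v) M(v_*) dσ dv_* dv; equivalently, the linear Boltzmann operator L f = K_b f - Σ f satisfies ∫_{ℝ^d} L f(v) dv = 0 on its domain. -/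
open MeasureTheory Real Metric Set Filter ENNReal

noncomputable section

/-- The uniform surface measure on the unit sphere `S^{d-1}` in `ℝ^d`. -/
def sphMeas (d : ℕ) : Measure (sphere (0 : Euc d) 1) := (volume : Measure (Euc d)).toSphere

/-- post-collisional velocity `v' = (v+v_*)/2 + (|v-v_*|/2)σ`. -/
def colV (d : ℕ) (v w σ : Euc d) : Euc d := (2 : ℝ)⁻¹ • (v + w) + (‖v - w‖ / 2) • σ

/-- post-collisional velocity `v_*' = (v+v_*)/2 - (|v-v_*|/2)σ`. -/
def colW (d : ℕ) (v w σ : Euc d) : Euc d := (2 : ℝ)⁻¹ • (v + w) - (‖v - w‖ / 2) • σ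

/-- `cos θ = ⟨(v-v_*)/|v-v_*|, σ⟩`. -/
def cosTh (d : ℕ) (v w σ : Euc d) : ℝ := inner ℝ (‖v - w‖⁻¹ • (v - w)) σ

/-- a fixed unit vector in `ℝ^d` (junk value `0` if `d = 0`). -/
def unitVec (d : ℕ) : Euc d := if h : 0 < d then EuclideanSpace.single (⟨0, h⟩ : Fin d) 1 else 0

/-- The `L¹(S^{d-1})` norm `∫_{S^{d-1}} b(⟨e,σ⟩) dσ` of an angular kernel `b`. -/
def sphNorm (d : ℕ) (b : ℝ → ℝ) : ℝ :=
  ∫ σ : sphere (0 : Euc d) 1, b (inner ℝ (unitVec d) (σ : Euc d)) ∂(sphMeas d)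

/-!
Write `v = x + u/2`, `w = x - u/2`. Then `v' = x + (|u|/2) σ` and `w' = x - (|u|/2) σ`, so after
integrating out the centre of mass `x` by translation invariance both sides become
`∫_u ∫_σ Φ(|u|, ⟨u/|u|, σ⟩) J(·)` with `J z = ∫ f(y) g(y - z) dy`, evaluated at `|u| σ` on the
left and at `u` on the right. In polar coordinates `u = r ω` the two integrals differ only by the
exchange of `ω` and `σ`, under which `⟨ω, σ⟩` and the product of the sphere measures are invariant.
-/

theorem norm_smul_coe_sphere {E : Type*} [NormedAddCommGroup E] [NormedSpace ℝ E]
    (r : Ioi (0 : ℝ)) (ω : sphere (0 : E) 1) : ‖(r : ℝ) • (ω : E)‖ = r := by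
  rw [norm_smul, norm_eq_of_mem_sphere, mul_one, Real.norm_of_nonneg (le_of_lt r.2)]

section Polar

variable {E : Type*} [NormedAddCommGroup E] [NormedSpace ℝ E] [FiniteDimensional ℝ E]
  [MeasurableSpace E] [BorelSpace E] (μ : Measure E) [μ.IsAddHaarMeasure]

theorem lintegral_eq_lintegral_Ioi_lintegral_sphere [Nontrivial E] {g : E → ℝ≥0∞}
    (hg : Measurable g) :
    ∫⁻ x, g x ∂μ = ∫⁻ r : Ioi (0 : ℝ), ∫⁻ ω : sphere (0 : E) 1, g ((r : ℝ) • (ω : E))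
      ∂μ.toSphere ∂(Measure.volumeIoiPow (Module.finrank ℝ E - 1)) := by
  set G : sphere (0 : E) 1 × Ioi (0 : ℝ) → ℝ≥0∞ := fun p => g ((p.2 : ℝ) • (p.1 : E))
  have hG : Measurable G := hg.comp (by fun_prop)
  calc ∫⁻ x, g x ∂μ = ∫⁻ x : ({0}ᶜ : Set E), g x ∂μ.comap (↑) := by
        rw [lintegral_subtype_comap (measurableSet_singleton _).compl, restrict_compl_singleton]
    _ = ∫⁻ x : ({0}ᶜ : Set E), G (homeomorphUnitSphereProd E x) ∂μ.comap (↑) := by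
        refine lintegral_congr fun x => ?_
        simp [G, smul_inv_smul₀ (norm_ne_zero_iff.2 x.2)]
    _ = _ := by
        rw [(μ.measurePreserving_homeomorphUnitSphereProd).lintegral_comp hG,
          lintegral_prod_symm _ hG.aemeasurable]

end Polar

theorem lintegral_lintegral_mul_swap_of_symm {α : Type*} [MeasurableSpace α] (ν : Measure α)
    [SFinite ν] {k : α → α → ℝ≥0∞} (hk : Measurable (Function.uncurry k))
    (hsymm : ∀ x y, k x y = k y x) {J : α → ℝ≥0∞} (hJ : Measurable J) :
    ∫⁻ x, ∫⁻ y, k x y * J y ∂ν ∂ν = ∫⁻ x, ∫⁻ y, k x y * J x ∂ν ∂ν := by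
  rw [lintegral_lintegral_swap (by fun_prop)]
  exact lintegral_congr fun y => lintegral_congr fun x => by rw [hsymm]

section Sphere

variable {E : Type*} [NormedAddCommGroup E] [InnerProductSpace ℝ E] [FiniteDimensional ℝ E]
  [MeasurableSpace E] [BorelSpace E] (μ : Measure E) [μ.IsAddHaarMeasure]

theorem lintegral_lintegral_sphere_comp_norm_smul {Φ : ℝ → ℝ → ℝ≥0∞}
    (hΦ : Measurable (Function.uncurry Φ)) {J : E → ℝ≥0∞} (hJ : Measurable J) :
    ∫⁻ u, ∫⁻ σ : sphere (0 : E) 1, Φ ‖u‖ (inner ℝ (‖u‖⁻¹ • u) (σ : E)) * J (‖u‖ • (σ : E))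
        ∂μ.toSphere ∂μ =
      ∫⁻ u, ∫⁻ σ : sphere (0 : E) 1, Φ ‖u‖ (inner ℝ (‖u‖⁻¹ • u) (σ : E)) * J u
        ∂μ.toSphere ∂μ := by
  cases subsingleton_or_nontrivial E
  · simp [μ.toSphere_eq_zero_iff.2 ‹_›]
  rw [lintegral_eq_lintegral_Ioi_lintegral_sphere μ (by fun_prop),
    lintegral_eq_lintegral_Ioi_lintegral_sphere μ (by fun_prop)]
  refine lintegral_congr fun r => ?_
  simp only [norm_smul_coe_sphere, inv_smul_smul₀ r.2.out.ne']
  exact lintegral_lintegral_mul_swap_of_symm μ.toSphere (k := fun ω σ => Φ r (inner ℝ (ω : E) σ))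
    (J := fun σ => J ((r : ℝ) • (σ : E))) (by fun_prop) (fun ω σ => by rw [real_inner_comm])
    (by fun_prop)

end Sphere

section Translation

variable {G : Type*} [AddCommGroup G] [MeasurableSpace G] [MeasurableAdd G]
  (μ : Measure G) [μ.IsAddRightInvariant]

theorem lintegral_mul_comp_add_comp_sub (f g : G → ℝ≥0∞) (a : G) :
    ∫⁻ x, f (x + a) * g (x - a) ∂μ = ∫⁻ y, f y * g (y - (a + a)) ∂μ := by
  rw [← lintegral_add_right_eq_self (fun y => f y * g (y - (a + a))) a]
  congr! 4 with x
  abel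

theorem lintegral_lintegral_mul_comp_add_comp_sub [MeasurableAdd₂ G] [MeasurableSub₂ G]
    [SFinite μ] {S : Type*} [MeasurableSpace S] (ν : Measure S) [SFinite ν] {c : S → ℝ≥0∞}
    {a : S → G} {f g : G → ℝ≥0∞} (hc : Measurable c) (ha : Measurable a) (hf : Measurable f)
    (hg : Measurable g) :
    ∫⁻ x, ∫⁻ s, c s * f (x + a s) * g (x - a s) ∂ν ∂μ =
      ∫⁻ s, c s * ∫⁻ y, f y * g (y - (a s + a s)) ∂μ ∂ν := by
  rw [lintegral_lintegral_swap (by fun_prop)]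
  refine lintegral_congr fun s => ?_
  simp_rw [mul_assoc]
  rw [lintegral_const_mul _ (by fun_prop), lintegral_mul_comp_add_comp_sub]

end Translation

section CenterOfMass

variable {E : Type*} [NormedAddCommGroup E] [NormedSpace ℝ E] [FiniteDimensional ℝ E]
  [MeasurableSpace E] [BorelSpace E] (μ : Measure E) [μ.IsAddHaarMeasure]

theorem lintegral_lintegral_eq_lintegral_lintegral_add_sub_half {K : E → E → ℝ≥0∞}
    (hK : Measurable (Function.uncurry K)) :
    ∫⁻ v, ∫⁻ w, K v w ∂μ ∂μ =
      ∫⁻ u, ∫⁻ x, K (x + (2 : ℝ)⁻¹ • u) (x - (2 : ℝ)⁻¹ • u) ∂μ ∂μ := by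
  calc ∫⁻ v, ∫⁻ w, K v w ∂μ ∂μ = ∫⁻ v, ∫⁻ u, K v (v - u) ∂μ ∂μ := by
        refine lintegral_congr fun v => ?_
        exact ((μ.measurePreserving_sub_left v).lintegral_comp (by fun_prop)).symm
    _ = ∫⁻ u, ∫⁻ v, K v (v - u) ∂μ ∂μ := lintegral_lintegral_swap (by fun_prop)
    _ = _ := by
        refine lintegral_congr fun u => ?_
        rw [← lintegral_add_right_eq_self _ ((2 : ℝ)⁻¹ • u)]
        congr! 3 with x
        module

end CenterOfMass

theorem add_inv_two_smul_sub_sub_inv_two_smul {V : Type*} [AddCommGroup V] [Module ℝ V]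
    (x u : V) :
    x + (2 : ℝ)⁻¹ • u - (x - (2 : ℝ)⁻¹ • u) = u := by
  module

section Collision

variable {d : ℕ}

theorem colV_add_inv_two_smul_sub (x u σ : Euc d) :
    colV d (x + (2 : ℝ)⁻¹ • u) (x - (2 : ℝ)⁻¹ • u) σ = x + (‖u‖ / 2) • σ := by
  rw [colV, add_inv_two_smul_sub_sub_inv_two_smul]
  module

theorem colW_add_inv_two_smul_sub (x u σ : Euc d) :
    colW d (x + (2 : ℝ)⁻¹ • u) (x - (2 : ℝ)⁻¹ • u) σ = x - (‖u‖ / 2) • σ := by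
  rw [colW, add_inv_two_smul_sub_sub_inv_two_smul]
  module

theorem cosTh_add_inv_two_smul_sub (x u σ : Euc d) :
    cosTh d (x + (2 : ℝ)⁻¹ • u) (x - (2 : ℝ)⁻¹ • u) σ = inner ℝ (‖u‖⁻¹ • u) σ := by
  rw [cosTh, add_inv_two_smul_sub_sub_inv_two_smul]

@[fun_prop]
theorem Measurable.cosTh {α : Type*} [MeasurableSpace α] {v w σ : α → Euc d} (hv : Measurable v)
    (hw : Measurable w) (hσ : Measurable σ) : Measurable fun a => cosTh d (v a) (w a) (σ a) := by
  unfold _root_.cosTh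
  fun_prop

@[fun_prop]
theorem Measurable.colV {α : Type*} [MeasurableSpace α] {v w σ : α → Euc d} (hv : Measurable v)
    (hw : Measurable w) (hσ : Measurable σ) : Measurable fun a => colV d (v a) (w a) (σ a) := by
  unfold _root_.colV
  fun_prop

@[fun_prop]
theorem Measurable.colW {α : Type*} [MeasurableSpace α] {v w σ : α → Euc d} (hv : Measurable v)
    (hw : Measurable w) (hσ : Measurable σ) : Measurable fun a => colW d (v a) (w a) (σ a) := by
  unfold _root_.colW
  fun_prop

instance : IsFiniteMeasure (sphMeas d) := by
  unfold sphMeas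
  infer_instance

theorem lintegral_collision_comp_colV_colW {Φ : ℝ → ℝ → ℝ≥0∞}
    (hΦ : Measurable (Function.uncurry Φ)) {f g : Euc d → ℝ≥0∞} (hf : Measurable f)
    (hg : Measurable g) :
    ∫⁻ v, ∫⁻ w, ∫⁻ σ : sphere (0 : Euc d) 1,
        Φ ‖v - w‖ (cosTh d v w σ) * f (colV d v w σ) * g (colW d v w σ) ∂sphMeas d =
      ∫⁻ v, ∫⁻ w, ∫⁻ σ : sphere (0 : Euc d) 1,
        Φ ‖v - w‖ (cosTh d v w σ) * f v * g w ∂sphMeas d := by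
  set J : Euc d → ℝ≥0∞ := fun z => ∫⁻ y, f y * g (y - z)
  have hJ : Measurable J := by fun_prop
  have hL : ∫⁻ v, ∫⁻ w, ∫⁻ σ : sphere (0 : Euc d) 1,
      Φ ‖v - w‖ (cosTh d v w σ) * f (colV d v w σ) * g (colW d v w σ) ∂sphMeas d =
      ∫⁻ u, ∫⁻ σ : sphere (0 : Euc d) 1,
        Φ ‖u‖ (inner ℝ (‖u‖⁻¹ • u) (σ : Euc d)) * J (‖u‖ • (σ : Euc d)) ∂sphMeas d := by
    rw [lintegral_lintegral_eq_lintegral_lintegral_add_sub_half volume (by fun_prop)]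
    simp only [colV_add_inv_two_smul_sub, colW_add_inv_two_smul_sub, cosTh_add_inv_two_smul_sub,
      add_inv_two_smul_sub_sub_inv_two_smul]
    refine lintegral_congr fun u => ?_
    rw [lintegral_lintegral_mul_comp_add_comp_sub volume (sphMeas d) (by fun_prop) (by fun_prop)
      hf hg]
    simp only [← add_smul, add_halves, J]
  have hR : ∫⁻ v, ∫⁻ w, ∫⁻ σ : sphere (0 : Euc d) 1,
      Φ ‖v - w‖ (cosTh d v w σ) * f v * g w ∂sphMeas d =
      ∫⁻ u, ∫⁻ σ : sphere (0 : Euc d) 1,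
        Φ ‖u‖ (inner ℝ (‖u‖⁻¹ • u) (σ : Euc d)) * J u ∂sphMeas d := by
    rw [lintegral_lintegral_eq_lintegral_lintegral_add_sub_half volume (by fun_prop)]
    simp only [cosTh_add_inv_two_smul_sub, add_inv_two_smul_sub_sub_inv_two_smul]
    refine lintegral_congr fun u => ?_
    rw [lintegral_lintegral_mul_comp_add_comp_sub volume (sphMeas d) (by fun_prop) (by fun_prop)
      hf hg]
    have hu : (2 : ℝ)⁻¹ • u + (2 : ℝ)⁻¹ • u = u := by module
    simp only [hu, J]
  rw [hL, hR]
  exact lintegral_lintegral_sphere_comp_norm_smul volume hΦ hJ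

end Collision

theorem mass_conservation_general
    (d : ℕ) (γ : ℝ)
    (b : ℝ → ℝ) (hbmeas : Measurable b) :
    ∀ f : Euc d → ℝ≥0∞, Measurable f →
      ∫⁻ v : Euc d, ∫⁻ w : Euc d, ∫⁻ σ : sphere (0 : Euc d) 1,
          ENNReal.ofReal (‖v - w‖ ^ γ * b (cosTh d v w (σ : Euc d))) *
            f (colV d v w (σ : Euc d)) *
            ENNReal.ofReal (Maxw d (colW d v w (σ : Euc d))) ∂(sphMeas d)
        = ∫⁻ v : Euc d, ∫⁻ w : Euc d, ∫⁻ σ : sphere (0 : Euc d) 1,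
            ENNReal.ofReal (‖v - w‖ ^ γ * b (cosTh d v w (σ : Euc d))) * f v *
              ENNReal.ofReal (Maxw d w) ∂(sphMeas d) := by
  intro f hf
  have hM : Measurable fun v => ENNReal.ofReal (Maxw d v) := by
    unfold Maxw
    fun_prop
  exact lintegral_collision_comp_colV_colW (Φ := fun r t => ENNReal.ofReal (r ^ γ * b t))
    (by fun_prop) hf hM

/-- Mass conservation: invariance of the collision integral under the pre-post collisional
change of variables. -/
theorem mass_conservation
    (d : ℕ) (hd : 2 ≤ d) (γ : ℝ) (hγ : -(d : ℝ) < γ)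
    (b : ℝ → ℝ) (hbmeas : Measurable b) (hbpos : ∀ x, 0 ≤ b x)
    (hbL1 : ∫⁻ σ : sphere (0 : Euc d) 1,
        ENNReal.ofReal (b (inner ℝ (unitVec d) (σ : Euc d))) ∂(sphMeas d) < ⊤) :
    ∀ f : Euc d → ℝ≥0∞, Measurable f →
      ∫⁻ v : Euc d, ∫⁻ w : Euc d, ∫⁻ σ : sphere (0 : Euc d) 1,
          ENNReal.ofReal (‖v - w‖ ^ γ * b (cosTh d v w (σ : Euc d))) *
            f (colV d v w (σ : Euc d)) *
            ENNReal.ofReal (Maxw d (colW d v w (σ : Euc d))) ∂(sphMeas d)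
        = ∫⁻ v : Euc d, ∫⁻ w : Euc d, ∫⁻ σ : sphere (0 : Euc d) 1,
            ENNReal.ofReal (‖v - w‖ ^ γ * b (cosTh d v w (σ : Euc d))) * f v *
              ENNReal.ofReal (Maxw d w) ∂(sphMeas d) :=
  mass_conservation_general d γ b hbmeas

end
end
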